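/- Uniqueness of coefficients for the ₁φ₁ recurrence: if rational functions S₁, T₁, S₂, T₂ in (a, c, x) over the field of rational functions in q satisfy, for all (a,c,x) in a nonempty open region, Sᵢ(a,c,x) · ₁φ₁(aq; cq; q, xq) + Tᵢ(a,c,x) · ₁φ₁(a; c; q, x) being equal for i = 1, 2, then S₁ = S₂ and T₁ = T₂. Equivalently, the ratio ₁φ₁(aq; cq; q, xq) / ₁φ₁(a; c; q, x) is not a rational function of (a, c, x). -/

import Mathlib

open scoped BigOperators

/-- q-shifted factorial (a;q)_j -/
noncomputable def qPoch (a q : ℂ) (j : ℕ) : ℂ :=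
  ∏ i ∈ Finset.range j, (1 - a * q ^ i)

/-- infinite q-shifted factorial (a;q)_∞ -/
noncomputable def qPochInf (a q : ℂ) : ℂ :=
  ∏' j : ℕ, (1 - a * q ^ j)

/-- basic hypergeometric series ₁φ₁(a; c; q, x) -/
noncomputable def phi11 (a c q x : ℂ) : ℂ :=
  ∑' j : ℕ, qPoch a q j / (qPoch q q j * qPoch c q j) *
    (-1) ^ j * q ^ (j * (j - 1) / 2) * x ^ j

/-- basic hypergeometric series ₀φ₁(–; c; q, x) -/
noncomputable def phi01 (c q x : ℂ) : ℂ :=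
  ∑' j : ℕ, q ^ (j * (j - 1)) * x ^ j / (qPoch q q j * qPoch c q j)

/-- basic hypergeometric series ₂φ₁(a, b; c; q, x) -/
noncomputable def phi21 (a b c q x : ℂ) : ℂ :=
  ∑' j : ℕ, qPoch a q j * qPoch b q j / (qPoch q q j * qPoch c q j) * x ^ j

/-!
Put `a = q^{-(m+1)}`: both series then terminate, and the hypothesis becomes the polynomial
identity `B · R(a, ε, ·) = A · P(a, ε, ·)` with `A(x) = ₁φ₁(q^{-(m+1)}; ε; q, x)` of degree `m + 1`
and `B(x) = ₁φ₁(q^{-m}; εq; q, qx)`. A three-term contiguous relation in `(a, c)` links `A` and `B`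
to a chain of terminating polynomials ending in the constant `1`, so the ideal `(A, B)` contains,
up to a constant, `∏_{j=1}^{m} x (x - εq^j)`. As `ε → 0`, `A(εq^j) → A(0) = 1`, so for small
`ε > 0` the polynomial `A` vanishes at none of these roots and is coprime to `B`. Hence `A` divides
`R(a, ε, ·)`, which is impossible once `m ≥ deg R` and `a`, `ε` avoid the finitely many values
where this restriction of `R` vanishes identically.
-/

open Polynomial Finset Filter Topology

theorem exists_mul_add_mul_eq_prod_mul {R : Type*} [CommRing R] {y α β : ℕ → R} {n : ℕ}
    (h : ∀ k < n, y (k + 2) = α k * y (k + 1) + β k * y k) :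
    ∃ u v, u * y (n + 1) + v * y n = (∏ k ∈ range n, β k) * y 0 := by
  induction n with
  | zero => exact ⟨0, 1, by simp⟩
  | succ n ih =>
    obtain ⟨u, v, huv⟩ := ih fun k hk => h k (by omega)
    refine ⟨v, u * β n - v * α n, ?_⟩
    rw [prod_range_succ, h n (by omega)]
    linear_combination β n * huv

theorem isCoprime_of_recurrence {R : Type*} [CommRing R] {y α β : ℕ → R} {n : ℕ}
    (h : ∀ k < n, y (k + 2) = α k * y (k + 1) + β k * y k) (h0 : y 0 = 1)
    (hβ : ∀ k < n, IsCoprime (y (n + 1)) (β k)) : IsCoprime (y (n + 1)) (y n) := by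
  obtain ⟨u, v, huv⟩ := exists_mul_add_mul_eq_prod_mul h
  have hcomb : v * y n + y (n + 1) * u = ∏ k ∈ range n, β k := by
    linear_combination huv + (∏ k ∈ range n, β k) * h0
  have hprod : IsCoprime (y (n + 1)) (v * y n + y (n + 1) * u) := by
    rw [hcomb]
    exact IsCoprime.prod_right fun k hk => hβ k (mem_range.1 hk)
  exact (IsCoprime.add_mul_left_right_iff.1 hprod).of_mul_right_right

theorem isCoprime_C_mul_X_mul_X_sub_C {K : Type*} [Field K] {p : K[X]} {d r : K} (hd : d ≠ 0)
    (h0 : p.eval 0 ≠ 0) (hr : p.eval r ≠ 0) : IsCoprime p (C d * (X * (X - C r))) := by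
  have hX : ∀ s, p.eval s ≠ 0 → IsCoprime p (X - C s) := fun s hs =>
    ((irreducible_X_sub_C s).coprime_iff_not_dvd.2 (by rwa [dvd_iff_isRoot])).symm
  rw [isCoprime_mul_unit_left_right (isUnit_C.2 hd.isUnit)]
  exact (by simpa using hX 0 h0 : IsCoprime p X).mul_right (hX r hr)

theorem triangle_succ (j : ℕ) : (j + 1) * (j + 1 - 1) / 2 = j * (j - 1) / 2 + j := by
  rw [← sum_range_id, ← sum_range_id, sum_range_succ]

section Restriction

variable {σ K : Type*} [Field K] [DecidableEq σ]

noncomputable def restrictCoord (f : MvPolynomial σ K) (w : σ → K) (i : σ) : K[X] :=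
  MvPolynomial.aeval (Function.update (fun j => C (w j)) i X) f

theorem eval_restrictCoord (f : MvPolynomial σ K) (w : σ → K) (i : σ) (t : K) :
    (restrictCoord f w i).eval t = MvPolynomial.eval (Function.update w i t) f := by
  have hpt : (fun j => aeval t (Function.update (fun j => C (w j)) i X j)) =
      Function.update w i t := by
    funext j
    by_cases hj : j = i
    · subst hj; simp
    · simp [hj]
  rw [restrictCoord, ← coe_aeval_eq_eval, ← AlgHom.comp_apply, MvPolynomial.comp_aeval, hpt]
  exact congrFun (MvPolynomial.aeval_eq_eval _) f

theorem natDegree_restrictCoord_le (f : MvPolynomial σ K) (w : σ → K) (i : σ) :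
    (restrictCoord f w i).natDegree ≤ f.totalDegree := by
  refine (MvPolynomial.aeval_natDegree_le f le_rfl _ fun j => ?_).trans (mul_one _).le
  by_cases hj : j = i
  · subst hj; simp
  · simp [hj]

theorem restrictCoord_ne_zero {f : MvPolynomial σ K} {w : σ → K}
    (hw : MvPolynomial.eval w f ≠ 0) (i : σ) : restrictCoord f w i ≠ 0 := by
  intro h
  have hwi := eval_restrictCoord f w i (w i)
  rw [h, eval_zero, Function.update_eq_self] at hwi
  exact hw hwi.symm

theorem finite_setOf_eval_update_eq_zero {f : MvPolynomial σ K} {w : σ → K}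
    (hw : MvPolynomial.eval w f ≠ 0) (i : σ) :
    {t | MvPolynomial.eval (Function.update w i t) f = 0}.Finite := by
  simpa [IsRoot, eval_restrictCoord] using finite_setOfPred_isRoot (restrictCoord_ne_zero hw i)

end Restriction

theorem eventually_nhdsGT_eval_update_ne_zero {σ : Type*} [DecidableEq σ]
    {f : MvPolynomial σ ℂ} {w : σ → ℂ} (hw : MvPolynomial.eval w f ≠ 0) (i : σ) :
    ∀ᶠ ε : ℝ in 𝓝[>] 0, MvPolynomial.eval (Function.update w i (ε : ℂ)) f ≠ 0 := by
  have hofReal : Tendsto (fun ε : ℝ => (ε : ℂ)) (𝓝[>] 0) cofinite :=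
    Complex.ofReal_injective.tendsto_cofinite.mono_left
      ((nhdsWithin_mono _ fun x hx => ne_of_gt hx).trans (nhdsNE_le_cofinite 0))
  exact hofReal.eventually (finite_setOf_eval_update_eq_zero hw i).eventually_cofinite_notMem

theorem qPoch_succ (a q : ℂ) (j : ℕ) : qPoch a q (j + 1) = qPoch a q j * (1 - a * q ^ j) :=
  prod_range_succ _ _

theorem qPoch_succ' (a q : ℂ) (j : ℕ) : qPoch a q (j + 1) = (1 - a) * qPoch (a * q) q j := by
  simp only [qPoch, prod_range_succ', pow_zero, mul_one, pow_succ, mul_assoc, mul_comm]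

theorem qPoch_eq_zero_iff {a q : ℂ} {j : ℕ} : qPoch a q j = 0 ↔ ∃ n < j, a * q ^ n = 1 := by
  simp only [qPoch, prod_eq_zero_iff, mem_range, sub_eq_zero, eq_comm (a := (1 : ℂ))]

theorem qPoch_ne_zero {a q : ℂ} (h : ∀ n : ℕ, a * q ^ n ≠ 1) (j : ℕ) : qPoch a q j ≠ 0 := by
  rw [Ne, qPoch_eq_zero_iff]
  exact fun ⟨n, _, hn⟩ => h n hn

theorem qPoch_inv_pow_eq_zero {q : ℂ} (hq : q ≠ 0) {k j : ℕ} (h : k < j) :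
    qPoch (q ^ k)⁻¹ q j = 0 :=
  qPoch_eq_zero_iff.2 ⟨k, h, inv_mul_cancel₀ (pow_ne_zero k hq)⟩

theorem qPoch_inv_pow_self_ne_zero {q : ℂ} (hq0 : q ≠ 0) (hq : ∀ n : ℕ, q ^ (n + 1) ≠ 1)
    (k : ℕ) : qPoch (q ^ k)⁻¹ q k ≠ 0 := by
  rw [Ne, qPoch_eq_zero_iff]
  rintro ⟨n, hn, hnk⟩
  obtain ⟨d, rfl⟩ := Nat.exists_eq_add_of_lt hn
  rw [inv_mul_eq_one₀ (pow_ne_zero _ hq0), show n + d + 1 = n + (d + 1) by ring, pow_add] at hnk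
  exact hq d (mul_left_cancel₀ (pow_ne_zero n hq0) (hnk.trans (mul_one _).symm))

theorem continuous_qPoch (q : ℂ) (j : ℕ) : Continuous fun a => qPoch a q j := by
  unfold qPoch
  fun_prop

noncomputable def phi11Coeff (a c q : ℂ) (j : ℕ) : ℂ :=
  qPoch a q j / (qPoch q q j * qPoch c q j) * (-1) ^ j * q ^ (j * (j - 1) / 2)

theorem phi11_eq_tsum (a c q x : ℂ) : phi11 a c q x = ∑' j, phi11Coeff a c q j * x ^ j := rfl

@[simp] theorem phi11Coeff_zero (a c q : ℂ) : phi11Coeff a c q 0 = 1 := by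
  simp [phi11Coeff, qPoch]

theorem phi11Coeff_eq_zero {a c q : ℂ} {j : ℕ} (h : qPoch a q j = 0) :
    phi11Coeff a c q j = 0 := by
  simp [phi11Coeff, h]

theorem phi11Coeff_ne_zero {a c q : ℂ} {j : ℕ} (hq : q ≠ 0) (ha : qPoch a q j ≠ 0)
    (hqq : qPoch q q j ≠ 0) (hc : qPoch c q j ≠ 0) : phi11Coeff a c q j ≠ 0 := by
  simp [phi11Coeff, *]

theorem phi11Coeff_succ (a c q : ℂ) (j : ℕ) :
    phi11Coeff a c q (j + 1) =
      phi11Coeff a c q j * ((1 - a * q ^ j) * -q ^ j / ((1 - q * q ^ j) * (1 - c * q ^ j))) := by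
  rw [phi11Coeff, phi11Coeff, qPoch_succ a, qPoch_succ q, qPoch_succ c, triangle_succ]
  simp only [pow_succ, pow_add, div_eq_mul_inv, mul_inv]
  ring

theorem phi11Coeff_succ' (a c q : ℂ) (j : ℕ) :
    phi11Coeff a c q (j + 1) =
      phi11Coeff (a * q) (c * q) q j * ((1 - a) * -q ^ j / ((1 - q * q ^ j) * (1 - c))) := by
  rw [phi11Coeff, phi11Coeff, qPoch_succ' a, qPoch_succ q, qPoch_succ' c, triangle_succ]
  simp only [pow_succ, pow_add, div_eq_mul_inv, mul_inv]
  ring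

theorem continuousAt_phi11Coeff {a c₀ q : ℂ} {j : ℕ} (hqq : qPoch q q j ≠ 0)
    (hc₀ : qPoch c₀ q j ≠ 0) : ContinuousAt (fun c => phi11Coeff a c q j) c₀ :=
  ((continuousAt_const.div (continuousAt_const.mul (continuous_qPoch q j).continuousAt)
    (mul_ne_zero hqq hc₀)).mul continuousAt_const).mul continuousAt_const

/- The contiguous relation
`₁φ₁(a; c; q, y) = (1 + B y) ₁φ₁(aq; cq; q, qy) + D y (y - c/(aq)) ₁φ₁(aq²; cq²; q, q²y)`
has the coefficients `B = phi11ContiguousB a c q` and `D = phi11ContiguousD a c q`. -/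
noncomputable def phi11ContiguousB (a c q : ℂ) : ℂ := (a * q - (1 - a)) / (1 - c)

noncomputable def phi11ContiguousD (a c q : ℂ) : ℂ :=
  a * q ^ 2 * (1 - a * q) / ((1 - c) * (1 - c * q))

theorem phi11ContiguousD_inv_pow_ne_zero {c q : ℂ} (hq0 : q ≠ 0)
    (hq : ∀ n : ℕ, q ^ (n + 1) ≠ 1) (hc : ∀ n : ℕ, c * q ^ n ≠ 1) (k : ℕ) :
    phi11ContiguousD (q ^ (k + 2))⁻¹ c q ≠ 0 := by
  have h1 : 1 - (q ^ (k + 2))⁻¹ * q ≠ 0 := by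
    rw [sub_ne_zero, ne_comm, show (q ^ (k + 2))⁻¹ * q = (q ^ (k + 1))⁻¹ by field_simp; ring]
    exact inv_ne_one.2 (hq k)
  have h2 : 1 - c ≠ 0 := sub_ne_zero.2 (by simpa using (hc 0).symm)
  have h3 : 1 - c * q ≠ 0 := sub_ne_zero.2 (by simpa using (hc 1).symm)
  unfold phi11ContiguousD
  simp [hq0, h1, h2, h3]

theorem phi11Coeff_one_contiguous {a c q : ℂ} (ha : a ≠ 0) (hq : ∀ n : ℕ, q ^ (n + 1) ≠ 1)
    (hc : ∀ n : ℕ, c * q ^ n ≠ 1) :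
    phi11Coeff a c q 1 = phi11Coeff (a * q) (c * q) q 1 * q + phi11ContiguousB a c q
      - phi11ContiguousD a c q * (c / (a * q)) := by
  have h0 : 1 - c ≠ 0 := sub_ne_zero.2 (by simpa using (hc 0).symm)
  have h1 : 1 - q * c ≠ 0 := sub_ne_zero.2 (by simpa [mul_comm] using (hc 1).symm)
  have h2 : 1 - q ≠ 0 := sub_ne_zero.2 (by simpa using (hq 0).symm)
  rw [phi11Coeff_succ', phi11Coeff_succ' (a * q)]
  simp only [phi11Coeff_zero, phi11ContiguousB, phi11ContiguousD, pow_zero, mul_one]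
  field_simp
  ring

theorem phi11Coeff_add_two_contiguous {a c q : ℂ} (ha : a ≠ 0)
    (hq : ∀ n : ℕ, q ^ (n + 1) ≠ 1) (hc : ∀ n : ℕ, c * q ^ n ≠ 1) (i : ℕ) :
    phi11Coeff a c q (i + 2) = phi11Coeff (a * q) (c * q) q (i + 2) * q ^ (i + 2)
      + phi11ContiguousB a c q * phi11Coeff (a * q) (c * q) q (i + 1) * q ^ (i + 1)
      + phi11ContiguousD a c q * (phi11Coeff (a * q ^ 2) (c * q ^ 2) q i * q ^ (2 * i)
          - c / (a * q) * phi11Coeff (a * q ^ 2) (c * q ^ 2) q (i + 1) * q ^ (2 * (i + 1))) := by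
  have h0 : 1 - c ≠ 0 := sub_ne_zero.2 (by simpa using (hc 0).symm)
  have h1 : 1 - q * c ≠ 0 := sub_ne_zero.2 (by simpa [mul_comm] using (hc 1).symm)
  have h2 : 1 - q * q ^ i ≠ 0 := by rw [← pow_succ']; exact sub_ne_zero.2 (hq i).symm
  have h3 : 1 - q ^ 2 * q ^ i ≠ 0 := by
    rw [show q ^ 2 * q ^ i = q ^ (i + 1 + 1) by ring]; exact sub_ne_zero.2 (hq _).symm
  have h4 : 1 - q ^ 2 * q ^ i * c ≠ 0 := by
    rw [show q ^ 2 * q ^ i * c = c * q ^ (i + 2) by ring]; exact sub_ne_zero.2 (hc _).symm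
  -- Express all four coefficients through `T = phi11Coeff (a q²) (c q²) q i`, with `p = q ^ i`.
  rw [phi11Coeff_succ' a c q (i + 1), phi11Coeff_succ (a * q) (c * q) q (i + 1),
    phi11Coeff_succ' (a * q) (c * q) q i, phi11Coeff_succ (a * q ^ 2) (c * q ^ 2) q i,
    show a * q * q = a * q ^ 2 by ring, show c * q * q = c * q ^ 2 by ring,
    show q ^ (i + 2) = q ^ 2 * q ^ i by ring, show q ^ (i + 1) = q * q ^ i by ring,
    show q ^ (2 * i) = (q ^ i) ^ 2 by ring, show q ^ (2 * (i + 1)) = q ^ 2 * (q ^ i) ^ 2 by ring]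
  generalize phi11Coeff (a * q ^ 2) (c * q ^ 2) q i = T
  generalize q ^ i = p at *
  simp only [phi11ContiguousB, phi11ContiguousD]
  field_simp
  ring

-- The polynomial `x ↦ ₁φ₁(q^{-k}; c; q, y x)`; the series terminates as `(q^{-k}; q)_j = 0`
-- for `j > k`.
noncomputable def phi11Terminating (k : ℕ) (c q y : ℂ) : ℂ[X] :=
  ∑ j ∈ range (k + 1), C (phi11Coeff (q ^ k)⁻¹ c q j * y ^ j) * X ^ j

theorem coeff_phi11Terminating {q : ℂ} (hq : q ≠ 0) (k : ℕ) (c y : ℂ) (n : ℕ) :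
    (phi11Terminating k c q y).coeff n = phi11Coeff (q ^ k)⁻¹ c q n * y ^ n := by
  simp only [phi11Terminating, finsetSum_coeff, coeff_C_mul_X_pow, sum_ite_eq, mem_range]
  split_ifs with h
  · rfl
  · rw [phi11Coeff_eq_zero (qPoch_inv_pow_eq_zero hq (by omega)), zero_mul]

theorem eval_phi11Terminating {q : ℂ} (hq : q ≠ 0) (k : ℕ) (c y x : ℂ) :
    (phi11Terminating k c q y).eval x = phi11 (q ^ k)⁻¹ c q (x * y) := by
  rw [phi11_eq_tsum, tsum_eq_sum (s := range (k + 1)), phi11Terminating, eval_finsetSum]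
  · refine sum_congr rfl fun j _ => ?_
    simp only [eval_mul, eval_C, eval_pow, eval_X]
    ring
  · intro j hj
    rw [phi11Coeff_eq_zero (qPoch_inv_pow_eq_zero hq (by simpa using hj)), zero_mul]

theorem phi11Terminating_zero (c q y : ℂ) : phi11Terminating 0 c q y = 1 := by
  simp [phi11Terminating]

theorem eval_zero_phi11Terminating (k : ℕ) (c q y : ℂ) :
    (phi11Terminating k c q y).eval 0 = 1 := by
  simp [phi11Terminating, eval_finsetSum, sum_range_succ']

theorem natDegree_phi11Terminating {c q y : ℂ} (hq0 : q ≠ 0) (hq : ∀ n : ℕ, q ^ (n + 1) ≠ 1)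
    (hc : ∀ n : ℕ, c * q ^ n ≠ 1) (hy : y ≠ 0) (k : ℕ) :
    (phi11Terminating k c q y).natDegree = k := by
  have hqq : qPoch q q k ≠ 0 := qPoch_ne_zero (fun n => by rw [← pow_succ']; exact hq n) k
  refine le_antisymm (natDegree_le_iff_coeff_eq_zero.2 fun n hn => ?_) (le_natDegree_of_ne_zero ?_)
  · rw [coeff_phi11Terminating hq0,
      phi11Coeff_eq_zero (qPoch_inv_pow_eq_zero hq0 (by exact_mod_cast hn)), zero_mul]
  · rw [coeff_phi11Terminating hq0]
    exact mul_ne_zero (phi11Coeff_ne_zero hq0 (qPoch_inv_pow_self_ne_zero hq0 hq k) hqq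
      (qPoch_ne_zero hc k)) (pow_ne_zero k hy)

theorem tendsto_eval_phi11Terminating {q : ℂ} (hq : ∀ n : ℕ, q ^ (n + 1) ≠ 1)
    (k : ℕ) (w : ℂ) : Tendsto (fun c => (phi11Terminating k c q 1).eval (c * w)) (𝓝 0) (𝓝 1) := by
  have hcont : ContinuousAt (fun c => (phi11Terminating k c q 1).eval (c * w)) 0 := by
    simp only [phi11Terminating, eval_finsetSum, eval_mul, eval_C, eval_pow, eval_X, one_pow,
      mul_one]
    refine tendsto_finsetSum _ fun j _ => ?_
    exact (continuousAt_phi11Coeff (qPoch_ne_zero (fun n => by rw [← pow_succ']; exact hq n) j)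
      (by simp [qPoch])).mul ((continuousAt_id.mul continuousAt_const).pow j)
  simpa [eval_zero_phi11Terminating] using hcont.tendsto

theorem phi11Terminating_contiguous {c q : ℂ} (hq0 : q ≠ 0) (hq : ∀ n : ℕ, q ^ (n + 1) ≠ 1)
    (hc : ∀ n : ℕ, c * q ^ n ≠ 1) (k : ℕ) {y : ℂ} (hy : y ≠ 0) :
    phi11Terminating (k + 2) c q y =
      (1 + C (phi11ContiguousB (q ^ (k + 2))⁻¹ c q * y) * X)
          * phi11Terminating (k + 1) (c * q) q (q * y)
      + C (phi11ContiguousD (q ^ (k + 2))⁻¹ c q * y ^ 2) * (X * (X - C (c * q ^ (k + 1) / y)))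
          * phi11Terminating k (c * q ^ 2) q (q ^ 2 * y) := by
  have ha1 : (q ^ (k + 1))⁻¹ = (q ^ (k + 2))⁻¹ * q := by field_simp; ring
  have ha2 : (q ^ k)⁻¹ = (q ^ (k + 2))⁻¹ * q ^ 2 := by field_simp; ring
  have hroot : C (phi11ContiguousD (q ^ (k + 2))⁻¹ c q * y ^ 2) * C (c * q ^ (k + 1) / y)
      = C (phi11ContiguousD (q ^ (k + 2))⁻¹ c q * (c / ((q ^ (k + 2))⁻¹ * q)) * y) := by
    rw [← C_mul, ← ha1]
    congr 1
    field_simp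
  set a : ℂ := (q ^ (k + 2))⁻¹
  have ha : a ≠ 0 := inv_ne_zero (pow_ne_zero _ hq0)
  set F₁ := phi11Terminating (k + 1) (c * q) q (q * y)
  set F₂ := phi11Terminating k (c * q ^ 2) q (q ^ 2 * y)
  have hexp : (1 + C (phi11ContiguousB a c q * y) * X) * F₁
      + C (phi11ContiguousD a c q * y ^ 2) * (X * (X - C (c * q ^ (k + 1) / y))) * F₂
      = F₁ + C (phi11ContiguousB a c q * y) * (X * F₁)
        + C (phi11ContiguousD a c q * y ^ 2) * (X * (X * F₂))
        - C (phi11ContiguousD a c q * (c / (a * q)) * y) * (X * F₂) := by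
    linear_combination (-(X * F₂)) * hroot
  rw [hexp]
  ext n
  rcases n with _ | _ | i
  · simp [F₁, F₂, coeff_phi11Terminating hq0]
  · simp only [coeff_add, coeff_sub, coeff_C_mul, coeff_X_mul, coeff_X_mul_zero, F₁, F₂,
      coeff_phi11Terminating hq0, ha1, ha2, phi11Coeff_zero]
    linear_combination y * phi11Coeff_one_contiguous ha hq hc
  · simp only [coeff_add, coeff_sub, coeff_C_mul, coeff_X_mul, F₁, F₂,
      coeff_phi11Terminating hq0, ha1, ha2]
    linear_combination y ^ (i + 2) * phi11Coeff_add_two_contiguous ha hq hc i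

theorem phi11Terminating_contiguous_mul_pow {ε q : ℂ} (hq0 : q ≠ 0)
    (hq : ∀ n : ℕ, q ^ (n + 1) ≠ 1) (hε : ∀ n : ℕ, ε * q ^ n ≠ 1) (k s : ℕ) :
    phi11Terminating (k + 2) (ε * q ^ s) q (q ^ s) =
      (1 + C (phi11ContiguousB (q ^ (k + 2))⁻¹ (ε * q ^ s) q * q ^ s) * X)
          * phi11Terminating (k + 1) (ε * q ^ (s + 1)) q (q ^ (s + 1))
      + C (phi11ContiguousD (q ^ (k + 2))⁻¹ (ε * q ^ s) q * (q ^ s) ^ 2)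
          * (X * (X - C (ε * q ^ (k + 1))))
          * phi11Terminating k (ε * q ^ (s + 2)) q (q ^ (s + 2)) := by
  have hc : ∀ n : ℕ, ε * q ^ s * q ^ n ≠ 1 := fun n => by rw [mul_assoc, ← pow_add]; exact hε _
  rw [phi11Terminating_contiguous hq0 hq hc k (pow_ne_zero s hq0),
    show ε * q ^ s * q = ε * q ^ (s + 1) by ring, show q * q ^ s = q ^ (s + 1) by ring,
    show ε * q ^ s * q ^ 2 = ε * q ^ (s + 2) by ring, show q ^ 2 * q ^ s = q ^ (s + 2) by ring,
    show ε * q ^ s * q ^ (k + 1) / q ^ s = ε * q ^ (k + 1) by field_simp]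

theorem isCoprime_phi11Terminating {ε q : ℂ} (hq0 : q ≠ 0) (hq : ∀ n : ℕ, q ^ (n + 1) ≠ 1)
    (hε : ∀ n : ℕ, ε * q ^ n ≠ 1) (m : ℕ)
    (hroot : ∀ j < m, (phi11Terminating (m + 1) ε q 1).eval (ε * q ^ (j + 1)) ≠ 0) :
    IsCoprime (phi11Terminating (m + 1) ε q 1) (phi11Terminating m (ε * q) q q) := by
  -- `Y (m + 1)` and `Y m` are the two polynomials, `Y 0 = 1`, and consecutive terms satisfy
  -- the contiguous relation with `c = ε q ^ s`, `y = q ^ s`; its last factor has the roots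
  -- `0` and `ε q ^ (j + 1)`.
  set Y : ℕ → ℂ[X] := fun j => phi11Terminating j (ε * q ^ (m + 1 - j)) q (q ^ (m + 1 - j))
  have hrec : ∀ j < m, Y (j + 2) =
      (1 + C (phi11ContiguousB (q ^ (j + 2))⁻¹ (ε * q ^ (m - 1 - j)) q * q ^ (m - 1 - j)) * X)
          * Y (j + 1)
      + C (phi11ContiguousD (q ^ (j + 2))⁻¹ (ε * q ^ (m - 1 - j)) q * (q ^ (m - 1 - j)) ^ 2)
          * (X * (X - C (ε * q ^ (j + 1)))) * Y j := by
    intro j hj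
    simp only [Y, show m + 1 - (j + 2) = m - 1 - j by omega,
      show m + 1 - (j + 1) = m - 1 - j + 1 by omega, show m + 1 - j = m - 1 - j + 2 by omega]
    exact phi11Terminating_contiguous_mul_pow hq0 hq hε j _
  have htop : Y (m + 1) = phi11Terminating (m + 1) ε q 1 := by simp [Y]
  have key := isCoprime_of_recurrence hrec (by simp [Y, phi11Terminating_zero]) fun j hj => by
    rw [htop]
    refine isCoprime_C_mul_X_mul_X_sub_C ?_ (by simp [eval_zero_phi11Terminating]) (hroot j hj)
    have hc : ∀ n : ℕ, ε * q ^ (m - 1 - j) * q ^ n ≠ 1 := fun n => by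
      rw [mul_assoc, ← pow_add]; exact hε _
    exact mul_ne_zero (phi11ContiguousD_inv_pow_ne_zero hq0 hq hc j)
      (pow_ne_zero _ (pow_ne_zero _ hq0))
  simpa [htop, Y] using key

section RealBase

variable {q : ℝ}

theorem ofReal_mul_pow_ne_one (h0 : 0 < q) (h1 : q < 1) {ε : ℝ} (hε0 : 0 ≤ ε) (hε1 : ε < 1)
    (n : ℕ) : (ε : ℂ) * (q : ℂ) ^ n ≠ 1 := by
  have : ε * q ^ n < 1 := (mul_le_of_le_one_right hε0 (pow_le_one₀ h0.le h1.le)).trans_lt hε1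
  exact_mod_cast this.ne

theorem ofReal_pow_succ_ne_one (h0 : 0 < q) (h1 : q < 1) (n : ℕ) : (q : ℂ) ^ (n + 1) ≠ 1 := by
  rw [pow_succ']
  exact ofReal_mul_pow_ne_one h0 h1 h0.le h1 n

theorem eventually_isCoprime_phi11Terminating (h0 : 0 < q) (h1 : q < 1) (m : ℕ) :
    ∀ᶠ ε : ℝ in 𝓝[>] 0,
      IsCoprime (phi11Terminating (m + 1) ε q 1) (phi11Terminating m (ε * q) q q) := by
  have hq0 : (q : ℂ) ≠ 0 := by exact_mod_cast h0.ne'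
  have hofReal : Tendsto (fun ε : ℝ => (ε : ℂ)) (𝓝[>] 0) (𝓝 0) :=
    tendsto_nhdsWithin_of_tendsto_nhds (by simpa using Complex.continuous_ofReal.tendsto 0)
  have hroot : ∀ᶠ ε : ℝ in 𝓝[>] 0, ∀ j ∈ Set.Iio m,
      (phi11Terminating (m + 1) ε q 1).eval ((ε : ℂ) * (q : ℂ) ^ (j + 1)) ≠ 0 :=
    (Set.finite_Iio m).eventually_all.2 fun j _ =>
      ((tendsto_eval_phi11Terminating (ofReal_pow_succ_ne_one h0 h1) (m + 1) _).comp
        hofReal).eventually_ne one_ne_zero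
  filter_upwards [hroot, Ioo_mem_nhdsGT one_pos] with ε hε hε01
  exact isCoprime_phi11Terminating hq0 (ofReal_pow_succ_ne_one h0 h1)
    (ofReal_mul_pow_ne_one h0 h1 hε01.1.le hε01.2) m hε

theorem eventually_atTop_eval_update_inv_pow_ne_zero (h0 : 0 < q) (h1 : q < 1) {σ : Type*}
    [DecidableEq σ] {f : MvPolynomial σ ℂ} {w : σ → ℂ} (hw : MvPolynomial.eval w f ≠ 0)
    (i : σ) :
    ∀ᶠ m in atTop, MvPolynomial.eval (Function.update w i ((q : ℂ) ^ (m + 1))⁻¹) f ≠ 0 := by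
  have hinj : Function.Injective fun m : ℕ => ((q : ℂ) ^ (m + 1))⁻¹ := by
    intro m n hmn
    have : q ^ (m + 1) = q ^ (n + 1) := by exact_mod_cast inv_injective hmn
    simpa using (pow_right_strictAnti₀ h0 h1).injective this
  rw [← Nat.cofinite_eq_atTop]
  exact hinj.tendsto_cofinite.eventually
    (finite_setOf_eval_update_eq_zero hw i).eventually_cofinite_notMem

end RealBase

/-- Uniqueness of the coefficients in the ₁φ₁ three-term recurrence, stated in
its equivalent form: the ratio ₁φ₁(aq; cq; q, xq) / ₁φ₁(a; c; q, x) is not a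
rational function of (a, c, x). -/
theorem phi11_shift_ratio_not_rational (q : ℝ) (h0 : 0 < q) (h1 : q < 1) :
    ¬ ∃ P R : MvPolynomial (Fin 3) ℂ, R ≠ 0 ∧
        ∀ a c x : ℂ, (∀ n : ℕ, c * (q : ℂ) ^ n ≠ 1) →
          phi11 (a * q) (c * q) (q : ℂ) (x * q) * MvPolynomial.eval ![a, c, x] R
            = phi11 a c (q : ℂ) x * MvPolynomial.eval ![a, c, x] P := by
  rintro ⟨P, R, hR, hPR⟩
  have hq0 : (q : ℂ) ≠ 0 := by exact_mod_cast h0.ne'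
  obtain ⟨w, hw⟩ : ∃ w, MvPolynomial.eval w R ≠ 0 := by
    by_contra! h
    exact hR (MvPolynomial.funext fun x => by simp [h x])
  obtain ⟨m, hm, hwm⟩ := ((eventually_ge_atTop R.totalDegree).and
    (eventually_atTop_eval_update_inv_pow_ne_zero h0 h1 hw 0)).exists
  set a : ℂ := ((q : ℂ) ^ (m + 1))⁻¹
  have hIoo : ∀ᶠ ε : ℝ in 𝓝[>] 0, ε ∈ Set.Ioo 0 1 := Ioo_mem_nhdsGT one_pos
  obtain ⟨ε, ⟨hε0, hε1⟩, hwε, hcop⟩ := (hIoo.and ((eventually_nhdsGT_eval_update_ne_zero hwm 1).and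
    (eventually_isCoprime_phi11Terminating h0 h1 m))).exists
  set w' := Function.update (Function.update w 0 a) 1 (ε : ℂ)
  have hε : ∀ n : ℕ, (ε : ℂ) * (q : ℂ) ^ n ≠ 1 := ofReal_mul_pow_ne_one h0 h1 hε0.le hε1
  have hdvd : phi11Terminating (m + 1) ε q 1 ∣ restrictCoord R w' 2 := by
    refine hcop.dvd_of_dvd_mul_left ⟨restrictCoord P w' 2, Polynomial.funext fun x => ?_⟩
    have hw' : Function.update w' 2 x = ![a, ε, x] := by
      funext i; fin_cases i <;> simp [w']
    have ha : ((q : ℂ) ^ m)⁻¹ = a * q := by simp only [a]; field_simp; ring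
    rw [eval_mul, eval_mul, eval_restrictCoord, eval_restrictCoord, hw',
      eval_phi11Terminating hq0, eval_phi11Terminating hq0, ha, mul_one]
    exact hPR a ε x hε
  have hdeg := natDegree_le_of_dvd hdvd (restrictCoord_ne_zero hwε 2)
  rw [natDegree_phi11Terminating hq0 (ofReal_pow_succ_ne_one h0 h1) hε one_ne_zero] at hdeg
  have := natDegree_restrictCoord_le R w' 2
  omega
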